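/- Let G be a group acting transitively on the 2-arcs of a finite digraph Γ, let (u,v,w) be a 2-arc, and suppose G is also arc-transitive. If p is a prime dividing |G_v|, then p divides |G_{uv}|. In particular, π(G_{uv}) = π(G_v), i.e., the sets of prime divisors of |G_{uv}| and |G_v| coincide. -/
import Mathlib

/-- If every element of `L` factors as a product of an element of `H` and an element of `K`
(with `H, K ≤ L`), then `|L|` divides `|H| * |K|`. -/
lemma card_dvd_mul_of_cover {G : Type*} [Group G] [Finite G] (H K L : Subgroup G)
    (hH : H ≤ L) (hK : K ≤ L)
    (hcover : ∀ g ∈ L, ∃ h ∈ H, ∃ k ∈ K, g = h * k) :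
    Nat.card L ∣ Nat.card H * Nat.card K := by
  classical
  -- map between the coset spaces
  let F : H ⧸ (K.subgroupOf H) → L ⧸ (K.subgroupOf L) :=
    Quotient.map' (fun h : H => (⟨(h : G), hH h.2⟩ : L)) (by
      intro a b hab
      rw [QuotientGroup.leftRel_apply] at hab ⊢
      simpa [Subgroup.mem_subgroupOf] using hab)
  have hFinj : Function.Injective F := by
    intro a b
    induction a using Quotient.inductionOn'
    induction b using Quotient.inductionOn'
    intro hab
    refine Quotient.sound' ?_
    have := Quotient.exact' hab
    rw [QuotientGroup.leftRel_apply] at this ⊢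
    simpa [Subgroup.mem_subgroupOf] using this
  have hFsurj : Function.Surjective F := by
    intro q
    induction q using Quotient.inductionOn'
    rename_i g
    obtain ⟨h, hh, k, hk, hgk⟩ := hcover (g : G) g.2
    refine ⟨Quotient.mk'' ⟨h, hh⟩, Quotient.sound' ?_⟩
    rw [QuotientGroup.leftRel_apply]
    have : (h : G)⁻¹ * g = k := by rw [hgk]; group
    simpa [Subgroup.mem_subgroupOf, this] using hk
  have hQ : Nat.card (L ⧸ (K.subgroupOf L)) = Nat.card (H ⧸ (K.subgroupOf H)) :=
    (Nat.card_congr (Equiv.ofBijective F ⟨hFinj, hFsurj⟩)).symm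
  have hL : Nat.card L = Nat.card (L ⧸ (K.subgroupOf L)) * Nat.card (K.subgroupOf L) :=
    Subgroup.card_eq_card_quotient_mul_card_subgroup _
  have hKL : Nat.card (K.subgroupOf L) = Nat.card K :=
    Nat.card_congr (Subgroup.subgroupOfEquivOfLe hK).toEquiv
  have hHq : Nat.card (H ⧸ (K.subgroupOf H)) ∣ Nat.card H := by
    rw [Subgroup.card_eq_card_quotient_mul_card_subgroup (K.subgroupOf H)]
    exact dvd_mul_right _ _
  rw [hL, hQ, hKL]
  exact mul_dvd_mul hHq dvd_rfl

/-- In a finite `2`-arc-transitive (and arc-transitive) setting, every prime dividing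
`|G_v|` divides `|G_{uv}|`; in particular `π(G_{uv}) = π(G_v)`. -/
theorem stmt_8 {V G : Type*} [Group G] [Finite G] [MulAction G V]
    (r : V → V → Prop) (hirr : Irreflexive r)
    (haut : ∀ (g : G) (a b : V), r (g • a) (g • b) ↔ r a b)
    (harc : ∀ a b c d : V, r a b → r c d → ∃ g : G, g • a = c ∧ g • b = d)
    (h2arc : ∀ a b c a' b' c' : V, r a b → r b c → r a' b' → r b' c' →
      ∃ g : G, g • a = a' ∧ g • b = b' ∧ g • c = c')
    (u v w : V) (huv : r u v) (hvw : r v w) :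
    (∀ q : ℕ, q.Prime →
      q ∣ Nat.card ↥(MulAction.stabilizer G v) →
      q ∣ Nat.card ↥(MulAction.stabilizer G u ⊓ MulAction.stabilizer G v)) ∧
    (∀ q : ℕ, q.Prime →
      (q ∣ Nat.card ↥(MulAction.stabilizer G u ⊓ MulAction.stabilizer G v) ↔
       q ∣ Nat.card ↥(MulAction.stabilizer G v))) := by
  classical
  set Su := MulAction.stabilizer G u
  set Sv := MulAction.stabilizer G v
  set Sw := MulAction.stabilizer G w
  -- |S_{vw}| = |S_{uv}| by conjugation along an arc map (u,v) ↦ (v,w)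
  obtain ⟨g, hgu, hgv⟩ := harc u v v w huv hvw
  have hconj : Sv ⊓ Sw = (Su ⊓ Sv).map (MulAut.conj g).toMonoidHom := by
    rw [Subgroup.map_inf Su Sv (MulAut.conj g).toMonoidHom (MulAut.conj g).injective]
    congr 1
    · show MulAction.stabilizer G v = _
      rw [← hgu, MulAction.stabilizer_smul_eq_stabilizer_map_conj]
    · show MulAction.stabilizer G w = _
      rw [← hgv, MulAction.stabilizer_smul_eq_stabilizer_map_conj]
  have hcardvw : Nat.card ↥(Sv ⊓ Sw) = Nat.card ↥(Su ⊓ Sv) := by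
    rw [hconj]
    exact (Nat.card_congr
      (Subgroup.equivMapOfInjective _ _ (MulAut.conj g).injective).toEquiv).symm
  -- every element of S_v factors through S_{vw} · S_{uv}
  have hcover : ∀ x ∈ Sv, ∃ h ∈ Sv ⊓ Sw, ∃ k ∈ Su ⊓ Sv, x = h * k := by
    intro x hx
    have hxv : x • v = v := hx
    have hru : r (x • u) v := by
      have := haut x u v
      rw [hxv] at this
      exact this.mpr huv
    obtain ⟨h, hh1, hh2, hh3⟩ := h2arc (x • u) v w u v w hru hvw huv hvw
    refine ⟨h⁻¹, ?_, h * x, ?_, by group⟩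
    · have : h ∈ Sv ⊓ Sw := ⟨hh2, hh3⟩
      exact inv_mem this
    · constructor
      · show (h * x) • u = u
        rw [mul_smul]; exact hh1
      · show (h * x) • v = v
        rw [mul_smul, hxv]; exact hh2
  have hdvd : Nat.card ↥Sv ∣ Nat.card ↥(Su ⊓ Sv) * Nat.card ↥(Su ⊓ Sv) := by
    have := card_dvd_mul_of_cover (Sv ⊓ Sw) (Su ⊓ Sv) Sv inf_le_left inf_le_right hcover
    rwa [hcardvw] at this
  have fwd : ∀ q : ℕ, q.Prime → q ∣ Nat.card ↥Sv → q ∣ Nat.card ↥(Su ⊓ Sv) := by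
    intro q hq hqv
    have : q ∣ Nat.card ↥(Su ⊓ Sv) * Nat.card ↥(Su ⊓ Sv) := hqv.trans hdvd
    rcases (Nat.Prime.dvd_mul hq).mp this with h | h <;> exact h
  refine ⟨fwd, fun q hq => ⟨fun h => h.trans (Subgroup.card_dvd_of_le inf_le_right),
    fwd q hq⟩⟩
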